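/- arXiv:2007.12404 — 6 statements merged into one kernel-verified Lean document; each statement's English description precedes it below -/
import Mathlib

section
/- If two chunks ch and ch' have disjoint sets of positions, then their concatenation ch·ch' is a chunk. -/
/-- An (idealised E)UTxO transaction: a finite set of inputs (position, key),
a finite set of outputs (position, data, validator), not both empty.
Positions (atoms) are modelled by natural numbers. -/
structure Tx (α β V : Type) where
  inputs : Set (ℕ × α)
  outputs : Set (ℕ × β × V)
  fin_inputs : inputs.Finite
  fin_outputs : outputs.Finite
  nontrivial : inputs.Nonempty ∨ outputs.Nonempty

/-- `val v d tx i` : validator `v`, carrying state data `d`, validates the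
pointed transaction `tx @ i` (a transaction `tx` with distinguished input `i`). -/
def IsChunk {α β V : Type} (val : V → β → Tx α β V → (ℕ × α) → Prop)
    (txs : List (Tx α β V)) : Prop :=
  (∀ m n (hm : m < txs.length) (hn : n < txs.length),
      ∀ o ∈ (txs.get ⟨m, hm⟩).outputs, ∀ o' ∈ (txs.get ⟨n, hn⟩).outputs,
        o.1 = o'.1 → m = n ∧ o = o') ∧
  (∀ m n (hm : m < txs.length) (hn : n < txs.length),
      ∀ i ∈ (txs.get ⟨m, hm⟩).inputs, ∀ i' ∈ (txs.get ⟨n, hn⟩).inputs,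
        i.1 = i'.1 → m = n ∧ i = i') ∧
  (∀ m n (hm : m < txs.length) (hn : n < txs.length),
      ∀ i ∈ (txs.get ⟨m, hm⟩).inputs, ∀ o ∈ (txs.get ⟨n, hn⟩).outputs,
        i.1 = o.1 → n < m ∧ val o.2.2 o.2.1 (txs.get ⟨m, hm⟩) i)

/-- Input positions of a transaction. -/
def inputPos {α β V : Type} (tx : Tx α β V) : Set ℕ := {a | ∃ i ∈ tx.inputs, i.1 = a}

/-- Output positions of a transaction. -/
def outputPos {α β V : Type} (tx : Tx α β V) : Set ℕ := {a | ∃ o ∈ tx.outputs, o.1 = a}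

/-- Positions of a transaction. -/
def posTx {α β V : Type} (tx : Tx α β V) : Set ℕ := inputPos tx ∪ outputPos tx

/-- Positions of a list of transactions. -/
def posList {α β V : Type} (txs : List (Tx α β V)) : Set ℕ :=
  {a | ∃ tx ∈ txs, a ∈ posTx tx}

/-- Unspent transaction inputs: positions of inputs not pointing to an earlier output. -/
def utxi {α β V : Type} (txs : List (Tx α β V)) : Set ℕ :=
  {a | ∃ m, ∃ hm : m < txs.length, ∃ i ∈ (txs.get ⟨m, hm⟩).inputs, i.1 = a ∧
        ∀ n, ∀ hn : n < txs.length, n < m →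
          ∀ o ∈ (txs.get ⟨n, hn⟩).outputs, o.1 ≠ a}

/-- Unspent transaction outputs: positions of outputs not pointed to by a later input. -/
def utxo {α β V : Type} (txs : List (Tx α β V)) : Set ℕ :=
  {a | ∃ n, ∃ hn : n < txs.length, ∃ o ∈ (txs.get ⟨n, hn⟩).outputs, o.1 = a ∧
        ∀ m, ∀ hm : m < txs.length, n < m →
          ∀ i ∈ (txs.get ⟨m, hm⟩).inputs, i.1 ≠ a}

/-- Spent transaction channels: positions of outputs pointed to by a later input. -/
def stx {α β V : Type} (txs : List (Tx α β V)) : Set ℕ :=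
  {a | ∃ n, ∃ hn : n < txs.length, ∃ o ∈ (txs.get ⟨n, hn⟩).outputs, o.1 = a ∧
        ∃ m, ∃ hm : m < txs.length, n < m ∧
          ∃ i ∈ (txs.get ⟨m, hm⟩).inputs, i.1 = a}

/-- Chunks `x` and `x'` commute: `x ++ x'` and `x' ++ x` have the same validity
behaviour in every context. -/
def Commuting {α β V : Type} (val : V → β → Tx α β V → (ℕ × α) → Prop)
    (x x' : List (Tx α β V)) : Prop :=
  ∀ z : List (Tx α β V),
    (IsChunk val ((x ++ x') ++ z) ↔ IsChunk val ((x' ++ x) ++ z)) ∧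
    (IsChunk val (z ++ (x ++ x')) ↔ IsChunk val (z ++ (x' ++ x)))

variable {α β V : Type}

/-! Every index of `ch ++ ch'` lies in `ch` or in the shifted `ch'`. A clause of `IsChunk` about
two indices of the same half is that half's clause, shifted; two indices in different halves would
give a common position of `ch` and `ch'`, which disjointness rules out. -/

def PositionsDistinct {γ : Type} (f : Tx α β V → Set (ℕ × γ)) (txs : List (Tx α β V)) : Prop :=
  ∀ m n (hm : m < txs.length) (hn : n < txs.length),
    ∀ x ∈ f (txs.get ⟨m, hm⟩), ∀ y ∈ f (txs.get ⟨n, hn⟩), x.1 = y.1 → m = n ∧ x = y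

def ValidSpends (val : V → β → Tx α β V → (ℕ × α) → Prop) (txs : List (Tx α β V)) : Prop :=
  ∀ m n (hm : m < txs.length) (hn : n < txs.length),
    ∀ i ∈ (txs.get ⟨m, hm⟩).inputs, ∀ o ∈ (txs.get ⟨n, hn⟩).outputs,
      i.1 = o.1 → n < m ∧ val o.2.2 o.2.1 (txs.get ⟨m, hm⟩) i

theorem isChunk_iff (val : V → β → Tx α β V → (ℕ × α) → Prop) (txs : List (Tx α β V)) :
    IsChunk val txs ↔
      PositionsDistinct Tx.outputs txs ∧ PositionsDistinct Tx.inputs txs ∧ ValidSpends val txs :=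
  Iff.rfl

theorem List.get_append_cases {γ : Type*} (l l' : List γ) {m : ℕ} (hm : m < (l ++ l').length) :
    (∃ h : m < l.length, (l ++ l').get ⟨m, hm⟩ = l.get ⟨m, h⟩) ∨
      ∃ k, ∃ h : k < l'.length, m = l.length + k ∧ (l ++ l').get ⟨m, hm⟩ = l'.get ⟨k, h⟩ := by
  by_cases h : m < l.length
  · exact Or.inl ⟨h, List.getElem_append_left h⟩
  · refine Or.inr ⟨m - l.length, by simp at hm; omega, by omega, ?_⟩
    exact List.getElem_append_right (by omega)

theorem mem_posTx_of_mem_inputs {tx : Tx α β V} {i : ℕ × α} (hi : i ∈ tx.inputs) :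
    i.1 ∈ posTx tx :=
  Or.inl ⟨i, hi, rfl⟩

theorem mem_posTx_of_mem_outputs {tx : Tx α β V} {o : ℕ × β × V} (ho : o ∈ tx.outputs) :
    o.1 ∈ posTx tx :=
  Or.inr ⟨o, ho, rfl⟩

theorem mem_posList_of_mem_posTx_get {txs : List (Tx α β V)} {k : ℕ} {hk : k < txs.length}
    {a : ℕ} (ha : a ∈ posTx (txs.get ⟨k, hk⟩)) : a ∈ posList txs :=
  ⟨_, List.get_mem _ _, ha⟩

section Append

variable {ch ch' : List (Tx α β V)}

theorem posTx_get_ne_of_disjoint (hdisj : Disjoint (posList ch) (posList ch'))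
    {m k : ℕ} {hm : m < ch.length} {hk : k < ch'.length} {a b : ℕ}
    (ha : a ∈ posTx (ch.get ⟨m, hm⟩)) (hb : b ∈ posTx (ch'.get ⟨k, hk⟩)) : a ≠ b :=
  hdisj.ne_of_mem (mem_posList_of_mem_posTx_get ha) (mem_posList_of_mem_posTx_get hb)

theorem PositionsDistinct.append {γ : Type} {f : Tx α β V → Set (ℕ × γ)}
    (hf : ∀ tx, ∀ x ∈ f tx, x.1 ∈ posTx tx) (h : PositionsDistinct f ch)
    (h' : PositionsDistinct f ch') (hdisj : Disjoint (posList ch) (posList ch')) :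
    PositionsDistinct f (ch ++ ch') := by
  intro m n hm hn x hx y hy hxy
  rcases List.get_append_cases ch ch' hm with ⟨hm₁, hgm⟩ | ⟨k, hk, rfl, hgm⟩ <;>
    rcases List.get_append_cases ch ch' hn with ⟨hn₁, hgn⟩ | ⟨l, hl, rfl, hgn⟩ <;>
    rw [hgm] at hx <;> rw [hgn] at hy
  · exact h m n hm₁ hn₁ x hx y hy hxy
  · exact (posTx_get_ne_of_disjoint hdisj (hf _ x hx) (hf _ y hy) hxy).elim
  · exact (posTx_get_ne_of_disjoint hdisj (hf _ y hy) (hf _ x hx) hxy.symm).elim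
  · obtain ⟨rfl, hxy⟩ := h' k l hk hl x hx y hy hxy
    exact ⟨rfl, hxy⟩

theorem ValidSpends.append {val : V → β → Tx α β V → (ℕ × α) → Prop}
    (h : ValidSpends val ch) (h' : ValidSpends val ch')
    (hdisj : Disjoint (posList ch) (posList ch')) : ValidSpends val (ch ++ ch') := by
  intro m n hm hn i hi o ho hio
  rcases List.get_append_cases ch ch' hm with ⟨hm₁, hgm⟩ | ⟨k, hk, rfl, hgm⟩ <;>
    rcases List.get_append_cases ch ch' hn with ⟨hn₁, hgn⟩ | ⟨l, hl, rfl, hgn⟩ <;>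
    rw [hgm] at hi ⊢ <;> rw [hgn] at ho
  · exact h m n hm₁ hn₁ i hi o ho hio
  · exact (posTx_get_ne_of_disjoint hdisj (mem_posTx_of_mem_inputs hi)
      (mem_posTx_of_mem_outputs ho) hio).elim
  · exact (posTx_get_ne_of_disjoint hdisj (mem_posTx_of_mem_outputs ho)
      (mem_posTx_of_mem_inputs hi) hio.symm).elim
  · obtain ⟨hlk, hval⟩ := h' k l hk hl i hi o ho hio
    exact ⟨by omega, hval⟩

end Append

/-- Chunks with disjoint sets of positions compose to a chunk. -/
theorem fresh_chunks_defined (val : V → β → Tx α β V → (ℕ × α) → Prop)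
    (ch ch' : List (Tx α β V)) (h : IsChunk val ch) (h' : IsChunk val ch')
    (hdisj : posList ch ∩ posList ch' = ∅) :
    IsChunk val (ch ++ ch') := by
  obtain ⟨ho, hi, hs⟩ := (isChunk_iff val ch).1 h
  obtain ⟨ho', hi', hs'⟩ := (isChunk_iff val ch').1 h'
  have hdisj : Disjoint (posList ch) (posList ch') := Set.disjoint_iff_inter_eq_empty.2 hdisj
  exact ⟨ho.append (fun _ _ => mem_posTx_of_mem_outputs) ho' hdisj,
    hi.append (fun _ _ => mem_posTx_of_mem_inputs) hi' hdisj, hs.append hs' hdisj⟩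
end

section
/- If tx and tx' are transactions with disjoint sets of positions, then the following are equivalent: [tx, tx'] is a chunk; [tx', tx] is a chunk; both [tx] and [tx'] are chunks. -/
variable {α β V : Type}

lemma mem_posTx_of_input {a : Tx α β V} {i : ℕ × α} (h : i ∈ a.inputs) : i.1 ∈ posTx a :=
  Or.inl ⟨i, h, rfl⟩

lemma mem_posTx_of_output {a : Tx α β V} {o : ℕ × β × V} (h : o ∈ a.outputs) : o.1 ∈ posTx a :=
  Or.inr ⟨o, h, rfl⟩

lemma pair_chunk (val : V → β → Tx α β V → (ℕ × α) → Prop) (a b : Tx α β V)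
    (hd : ∀ p, p ∈ posTx a → p ∈ posTx b → False) :
    IsChunk val [a, b] ↔ IsChunk val [a] ∧ IsChunk val [b] := by
  constructor
  · rintro ⟨h1, h2, h3⟩
    refine ⟨⟨?_, ?_, ?_⟩, ?_, ?_, ?_⟩
    · intro m n hm hn o ho o' ho' hp
      match m, n, hm, hn with
      | 0, 0, hm, hn =>
        exact ⟨rfl, (h1 0 0 (by norm_num) (by norm_num) o ho o' ho' hp).2⟩
    · intro m n hm hn i hi i' hi' hp
      match m, n, hm, hn with
      | 0, 0, hm, hn =>
        exact ⟨rfl, (h2 0 0 (by norm_num) (by norm_num) i hi i' hi' hp).2⟩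
    · intro m n hm hn i hi o ho hp
      match m, n, hm, hn with
      | 0, 0, hm, hn =>
        exact absurd (h3 0 0 (by norm_num) (by norm_num) i hi o ho hp).1 (by omega)
    · intro m n hm hn o ho o' ho' hp
      match m, n, hm, hn with
      | 0, 0, hm, hn =>
        exact ⟨rfl, (h1 1 1 (by norm_num) (by norm_num) o ho o' ho' hp).2⟩
    · intro m n hm hn i hi i' hi' hp
      match m, n, hm, hn with
      | 0, 0, hm, hn =>
        exact ⟨rfl, (h2 1 1 (by norm_num) (by norm_num) i hi i' hi' hp).2⟩
    · intro m n hm hn i hi o ho hp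
      match m, n, hm, hn with
      | 0, 0, hm, hn =>
        exact absurd (h3 1 1 (by norm_num) (by norm_num) i hi o ho hp).1 (by omega)
  · rintro ⟨⟨a1, a2, a3⟩, b1, b2, b3⟩
    refine ⟨?_, ?_, ?_⟩
    · intro m n hm hn o ho o' ho' hp
      match m, n, hm, hn with
      | 0, 0, hm, hn =>
        exact ⟨rfl, (a1 0 0 (by norm_num) (by norm_num) o ho o' ho' hp).2⟩
      | 1, 1, hm, hn =>
        exact ⟨rfl, (b1 0 0 (by norm_num) (by norm_num) o ho o' ho' hp).2⟩
      | 0, 1, hm, hn =>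
        exact absurd (hd o.1 (mem_posTx_of_output ho) (hp ▸ mem_posTx_of_output ho')) not_false
      | 1, 0, hm, hn =>
        exact absurd (hd o'.1 (mem_posTx_of_output ho') (hp ▸ mem_posTx_of_output ho)) not_false
      | m+2, _, hm, _ => exact absurd hm (by simp)
      | _, n+2, _, hn => exact absurd hn (by simp)
    · intro m n hm hn i hi i' hi' hp
      match m, n, hm, hn with
      | 0, 0, hm, hn =>
        exact ⟨rfl, (a2 0 0 (by norm_num) (by norm_num) i hi i' hi' hp).2⟩
      | 1, 1, hm, hn =>
        exact ⟨rfl, (b2 0 0 (by norm_num) (by norm_num) i hi i' hi' hp).2⟩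
      | 0, 1, hm, hn =>
        exact absurd (hd i.1 (mem_posTx_of_input hi) (hp ▸ mem_posTx_of_input hi')) not_false
      | 1, 0, hm, hn =>
        exact absurd (hd i'.1 (mem_posTx_of_input hi') (hp ▸ mem_posTx_of_input hi)) not_false
      | m+2, _, hm, _ => exact absurd hm (by simp)
      | _, n+2, _, hn => exact absurd hn (by simp)
    · intro m n hm hn i hi o ho hp
      match m, n, hm, hn with
      | 0, 0, hm, hn =>
        exact absurd (a3 0 0 (by norm_num) (by norm_num) i hi o ho hp).1 (by omega)
      | 1, 1, hm, hn =>
        exact absurd (b3 0 0 (by norm_num) (by norm_num) i hi o ho hp).1 (by omega)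
      | 0, 1, hm, hn =>
        exact absurd (hd i.1 (mem_posTx_of_input hi) (hp ▸ mem_posTx_of_output ho)) not_false
      | 1, 0, hm, hn =>
        exact absurd (hd o.1 (mem_posTx_of_output ho) (hp ▸ mem_posTx_of_input hi)) not_false
      | m+2, _, hm, _ => exact absurd hm (by simp)
      | _, n+2, _, hn => exact absurd hn (by simp)



/-- For transactions with disjoint positions:
`[tx, tx']` is a chunk iff `[tx', tx]` is a chunk iff both `[tx]` and `[tx']` are. -/
theorem fresh_tx_chunks (val : V → β → Tx α β V → (ℕ × α) → Prop)
    (tx tx' : Tx α β V) (hdisj : posTx tx ∩ posTx tx' = ∅) :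
    (IsChunk val [tx, tx'] ↔ IsChunk val [tx', tx]) ∧
    (IsChunk val [tx, tx'] ↔ IsChunk val [tx] ∧ IsChunk val [tx']) := by
  have hd : ∀ p, p ∈ posTx tx → p ∈ posTx tx' → False := fun p h1 h2 =>
    Set.eq_empty_iff_forall_notMem.mp hdisj p ⟨h1, h2⟩
  have hd' : ∀ p, p ∈ posTx tx' → p ∈ posTx tx → False := fun p h1 h2 => hd p h2 h1
  constructor
  · rw [pair_chunk val tx tx' hd, pair_chunk val tx' tx hd', and_comm]
  · exact pair_chunk val tx tx' hd
end

section
/- For any chunk ch in an IEUTxO model, the set of unspent transaction inputs utxi(ch) is disjoint from the set of unspent transaction outputs utxo(ch). -/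
variable {α β V : Type}

/-- **Statement 6.** For any chunk, the unspent inputs and unspent outputs are disjoint. -/
theorem utxi_inter_utxo (val : V → β → Tx α β V → (ℕ × α) → Prop)
    (ch : List (Tx α β V)) (h : IsChunk val ch) :
    utxi ch ∩ utxo ch = ∅ := by
  ext a
  simp only [Set.mem_inter_iff, Set.mem_empty_iff_false, iff_false]
  rintro ⟨⟨m, hm, i, hi, hia, hnone⟩, ⟨n, hn, o, ho, hoa, _⟩⟩
  obtain ⟨hnm, -⟩ := h.2.2 m n hm hn i hi o ho (by rw [hia, hoa])
  exact hnone n hn hnm o ho hoa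
end

section
/- For any chunk ch, the set of positions pos(ch) is the disjoint union of utxi(ch), utxo(ch), and stx(ch) (the spent transaction channels), and these three sets are pairwise disjoint. -/
variable {α β V : Type}

/-! An input position lies in `stx` or in `utxi` according to whether some earlier output shares
it, and an output position in `stx` or in `utxo` according to whether some later input does. For
disjointness, an input at the position of an output must come after it, so it is never unspent;
and a position determines its output, so the output cannot be both spent and unspent. -/

theorem mem_posList_iff {txs : List (Tx α β V)} {a : ℕ} :
    a ∈ posList txs ↔ ∃ m, ∃ hm : m < txs.length, a ∈ posTx (txs.get ⟨m, hm⟩) := by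
  constructor
  · rintro ⟨tx, htx, ha⟩
    obtain ⟨⟨m, hm⟩, rfl⟩ := List.mem_iff_get.mp htx
    exact ⟨m, hm, ha⟩
  · rintro ⟨m, hm, ha⟩
    exact ⟨_, List.get_mem txs ⟨m, hm⟩, ha⟩

theorem inputPos_subset_utxi_union_stx (txs : List (Tx α β V)) (m : ℕ) (hm : m < txs.length) :
    inputPos (txs.get ⟨m, hm⟩) ⊆ utxi txs ∪ stx txs := by
  rintro a ⟨i, hi, rfl⟩
  by_cases hspent : ∃ n, ∃ hn : n < txs.length, n < m ∧
      ∃ o ∈ (txs.get ⟨n, hn⟩).outputs, o.1 = i.1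
  · obtain ⟨n, hn, hnm, o, ho, hoi⟩ := hspent
    exact Or.inr ⟨n, hn, o, ho, hoi, m, hm, hnm, i, hi, rfl⟩
  · push Not at hspent
    exact Or.inl ⟨m, hm, i, hi, rfl, hspent⟩

theorem outputPos_subset_utxo_union_stx (txs : List (Tx α β V)) (n : ℕ) (hn : n < txs.length) :
    outputPos (txs.get ⟨n, hn⟩) ⊆ utxo txs ∪ stx txs := by
  rintro a ⟨o, ho, rfl⟩
  by_cases hspent : ∃ m, ∃ hm : m < txs.length, n < m ∧
      ∃ i ∈ (txs.get ⟨m, hm⟩).inputs, i.1 = o.1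
  · obtain ⟨m, hm, hnm, i, hi, hio⟩ := hspent
    exact Or.inr ⟨n, hn, o, ho, rfl, m, hm, hnm, i, hi, hio⟩
  · push Not at hspent
    exact Or.inl ⟨n, hn, o, ho, rfl, hspent⟩

theorem utxi_subset_posList (txs : List (Tx α β V)) : utxi txs ⊆ posList txs :=
  fun _ ⟨m, hm, i, hi, hia, _⟩ => mem_posList_iff.2 ⟨m, hm, Or.inl ⟨i, hi, hia⟩⟩

theorem utxo_subset_posList (txs : List (Tx α β V)) : utxo txs ⊆ posList txs :=
  fun _ ⟨n, hn, o, ho, hoa, _⟩ => mem_posList_iff.2 ⟨n, hn, Or.inr ⟨o, ho, hoa⟩⟩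

theorem stx_subset_posList (txs : List (Tx α β V)) : stx txs ⊆ posList txs :=
  fun _ ⟨n, hn, o, ho, hoa, _⟩ => mem_posList_iff.2 ⟨n, hn, Or.inr ⟨o, ho, hoa⟩⟩

theorem posList_eq_utxi_union_utxo_union_stx (txs : List (Tx α β V)) :
    posList txs = utxi txs ∪ utxo txs ∪ stx txs := by
  refine Set.Subset.antisymm (fun a ha => ?_) <|
    Set.union_subset (Set.union_subset (utxi_subset_posList txs) (utxo_subset_posList txs))
      (stx_subset_posList txs)
  obtain ⟨m, hm, hin | hout⟩ := mem_posList_iff.1 ha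
  · exact (inputPos_subset_utxi_union_stx txs m hm hin).imp Or.inl id
  · exact (outputPos_subset_utxo_union_stx txs m hm hout).imp Or.inr id

namespace IsChunk

variable {val : V → β → Tx α β V → (ℕ × α) → Prop} {txs : List (Tx α β V)}

theorem notMem_utxi_of_mem_outputPos (h : IsChunk val txs) {n : ℕ} {hn : n < txs.length}
    {a : ℕ} (ha : a ∈ outputPos (txs.get ⟨n, hn⟩)) : a ∉ utxi txs := by
  rintro ⟨m, hm, i, hi, rfl, hunspent⟩
  obtain ⟨o, ho, hoi⟩ := ha
  exact hunspent n hn (h.2.2 m n hm hn i hi o ho hoi.symm).1 o ho hoi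

theorem disjoint_utxi_utxo (h : IsChunk val txs) : Disjoint (utxi txs) (utxo txs) :=
  Set.disjoint_right.2 fun _ ⟨_, _, o, ho, hoa, _⟩ =>
    h.notMem_utxi_of_mem_outputPos ⟨o, ho, hoa⟩

theorem disjoint_utxi_stx (h : IsChunk val txs) : Disjoint (utxi txs) (stx txs) :=
  Set.disjoint_right.2 fun _ ⟨_, _, o, ho, hoa, _⟩ =>
    h.notMem_utxi_of_mem_outputPos ⟨o, ho, hoa⟩

theorem disjoint_utxo_stx (h : IsChunk val txs) : Disjoint (utxo txs) (stx txs) := by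
  refine Set.disjoint_left.2 ?_
  rintro a ⟨n, hn, o, ho, rfl, hunspent⟩ ⟨n', hn', o', ho', hoo', m, hm, hnm, i, hi, hia⟩
  obtain ⟨rfl, rfl⟩ := h.1 n n' hn hn' o ho o' ho' hoo'.symm
  exact hunspent m hm hnm i hi hia

end IsChunk

/-- For any chunk, `pos = utxi ∪ utxo ∪ stx`, and the three
sets are pairwise disjoint. -/
theorem pos_eq_utxi_utxo_stx (val : V → β → Tx α β V → (ℕ × α) → Prop)
    (ch : List (Tx α β V)) (h : IsChunk val ch) :
    posList ch = utxi ch ∪ utxo ch ∪ stx ch ∧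
    utxi ch ∩ utxo ch = ∅ ∧
    utxi ch ∩ stx ch = ∅ ∧
    utxo ch ∩ stx ch = ∅ :=
  ⟨posList_eq_utxi_union_utxo_union_stx ch,
    Set.disjoint_iff_inter_eq_empty.1 h.disjoint_utxi_utxo,
    Set.disjoint_iff_inter_eq_empty.1 h.disjoint_utxi_stx,
    Set.disjoint_iff_inter_eq_empty.1 h.disjoint_utxo_stx⟩
end

section
/- (Church-Rosser for UTxO) Let y, x, x' be chunks such that y·x·x' is a chunk and utxi(y·x') = utxi(y·x·x'). Then x and x' commute, and y·x'·x is a chunk. -/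
variable {α β V : Type}


private lemma getElem_congr'' {T : Type} {l : List T} {i j : ℕ} (h : i = j) {hi : i < l.length} :
    l[i]'hi = l[j]'(h ▸ hi) := by subst h; rfl

private lemma getElem_quad {T : Type} {a x x' b : List T} {k : ℕ}
    (hk : k < a.length + x.length + x'.length + b.length) :
    (a ++ x ++ x' ++ b)[k]'(by simp [List.length_append]; omega) =
      if h1 : k < a.length then a[k]
      else if h2 : k < a.length + x.length then x[k - a.length]'(by omega)
      else if h3 : k < a.length + x.length + x'.length then
        x'[k - a.length - x.length]'(by omega)
      else b[k - a.length - x.length - x'.length]'(by omega) := by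
  split_ifs with h1 h2 h3
  · rw [List.getElem_append_left (by simp [List.length_append]; omega),
      List.getElem_append_left (by simp [List.length_append]; omega),
      List.getElem_append_left h1]
  · rw [List.getElem_append_left (by simp [List.length_append]; omega),
      List.getElem_append_left (by simp [List.length_append]; omega),
      List.getElem_append_right (by omega)]
  · rw [List.getElem_append_left (by simp [List.length_append]; omega),
      List.getElem_append_right (by simp [List.length_append]; omega)]
    exact getElem_congr'' (by simp [List.length_append]; omega)
  · rw [List.getElem_append_right (by simp [List.length_append]; omega)]
    exact getElem_congr'' (by simp [List.length_append]; omega)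

private lemma quad1 {T : Type} {a x x' b : List T} {k : ℕ} (h1 : k < a.length) {hk} :
    (a ++ x ++ x' ++ b)[k]'hk = a[k] := by
  have hL : k < a.length + x.length + x'.length + b.length := by omega
  rw [getElem_quad hL, dif_pos h1]

private lemma quad2 {T : Type} {a x x' b : List T} {j : ℕ} (hj : j < x.length) {hk} :
    (a ++ x ++ x' ++ b)[a.length + j]'hk = x[j] := by
  have hL : a.length + j < a.length + x.length + x'.length + b.length := by omega
  rw [getElem_quad hL, dif_neg (by omega), dif_pos (by omega)]
  exact getElem_congr'' (by omega)

private lemma quad3 {T : Type} {a x x' b : List T} {j : ℕ} (hj : j < x'.length) {hk} :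
    (a ++ x ++ x' ++ b)[a.length + x.length + j]'hk = x'[j] := by
  have hL : a.length + x.length + j < a.length + x.length + x'.length + b.length := by omega
  rw [getElem_quad hL, dif_neg (by omega), dif_neg (by omega), dif_pos (by omega)]
  exact getElem_congr'' (by omega)

private lemma quad_mem2 {T : Type} {a x x' b : List T} {k : ℕ}
    (h1 : a.length ≤ k) (h2 : k < a.length + x.length) {hk} :
    (a ++ x ++ x' ++ b)[k]'hk ∈ x := by
  have hL : k < a.length + x.length + x'.length + b.length := by omega
  rw [getElem_quad hL, dif_neg (by omega), dif_pos (by omega)]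
  exact List.getElem_mem _

private lemma quad_mem3 {T : Type} {a x x' b : List T} {k : ℕ}
    (h1 : a.length + x.length ≤ k) (h2 : k < a.length + x.length + x'.length) {hk} :
    (a ++ x ++ x' ++ b)[k]'hk ∈ x' := by
  have hL : k < a.length + x.length + x'.length + b.length := by omega
  rw [getElem_quad hL, dif_neg (by omega), dif_neg (by omega), dif_pos (by omega)]
  exact List.getElem_mem _

private lemma input_pos_mem {l : List (Tx α β V)} {tx : Tx α β V} (h : tx ∈ l)
    {i : ℕ × α} (hi : i ∈ tx.inputs) : i.1 ∈ posList l := by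
  exact ⟨tx, h, Or.inl ⟨i, hi, rfl⟩⟩

private lemma output_pos_mem {l : List (Tx α β V)} {tx : Tx α β V} (h : tx ∈ l)
    {o : ℕ × β × V} (ho : o ∈ tx.outputs) : o.1 ∈ posList l := by
  exact ⟨tx, h, Or.inr ⟨o, ho, rfl⟩⟩
private lemma chunk_of_map (val : V → β → Tx α β V → (ℕ × α) → Prop)
    (O N : List (Tx α β V)) (g : ℕ → ℕ)
    (hlen : ∀ k, k < N.length → g k < O.length)
    (hget : ∀ (k : ℕ) (hk : k < N.length), N[k] = O[g k]'(hlen k hk))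
    (hinj : ∀ m n, m < N.length → n < N.length → g m = g n → m = n)
    (hord : ∀ m n (hm : m < N.length) (hn : n < N.length), g n < g m →
      n < m ∨ ∀ i ∈ (N[m]'hm).inputs, ∀ o ∈ (N[n]'hn).outputs, i.1 ≠ o.1)
    (hO : IsChunk val O) : IsChunk val N := by
  obtain ⟨c1, c2, c3⟩ := hO
  simp only [List.get_eq_getElem] at c1 c2 c3
  refine ⟨?_, ?_, ?_⟩ <;> simp only [List.get_eq_getElem] <;> intro m n hm hn
  · intro o ho o' ho' hpos
    rw [hget m hm] at ho; rw [hget n hn] at ho'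
    obtain ⟨he, heq⟩ := c1 _ _ (hlen m hm) (hlen n hn) o ho o' ho' hpos
    exact ⟨hinj m n hm hn he, heq⟩
  · intro i hi i' hi' hpos
    rw [hget m hm] at hi; rw [hget n hn] at hi'
    obtain ⟨he, heq⟩ := c2 _ _ (hlen m hm) (hlen n hn) i hi i' hi' hpos
    exact ⟨hinj m n hm hn he, heq⟩
  · intro i hi o ho hpos
    have hi' := hi; have ho' := ho
    rw [hget m hm] at hi'; rw [hget n hn] at ho'
    obtain ⟨hlt, hval⟩ := c3 _ _ (hlen m hm) (hlen n hn) i hi' o ho' hpos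
    refine ⟨?_, by rw [hget m hm]; exact hval⟩
    rcases hord m n hm hn hlt with hlt' | hne
    · exact hlt'
    · exact absurd hpos (hne i hi o ho)

private def swapIdx (A X X' k : ℕ) : ℕ :=
  if k < A then k else if k < A + X' then k + X
  else if k < A + X' + X then k - X' else k

private lemma swap_block (val : V → β → Tx α β V → (ℕ × α) → Prop)
    (x x' a b : List (Tx α β V))
    (hdisj : ∀ p, p ∈ posList x → p ∈ posList x' → False)
    (h : IsChunk val (a ++ x ++ x' ++ b)) :
    IsChunk val (a ++ x' ++ x ++ b) := by
  have hN : (a ++ x' ++ x ++ b).length = a.length + x'.length + x.length + b.length := by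
    simp [List.length_append]; omega
  have hO : (a ++ x ++ x' ++ b).length = a.length + x.length + x'.length + b.length := by
    simp [List.length_append]; omega
  have hlen : ∀ k, k < (a ++ x' ++ x ++ b).length →
      swapIdx a.length x.length x'.length k < (a ++ x ++ x' ++ b).length := by
    intro k hk; rw [hO]; rw [hN] at hk; unfold swapIdx; split_ifs <;> omega
  refine chunk_of_map val _ _ (swapIdx a.length x.length x'.length) hlen ?_ ?_ ?_ h
  · -- hget
    intro k hk
    have hk' := hk; rw [hN] at hk'
    have hg := hlen k hk; rw [hO] at hg
    rw [getElem_quad (a := a) (x := x') (x' := x) (b := b) hk',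
        getElem_quad (a := a) (x := x) (x' := x') (b := b) hg]
    unfold swapIdx
    split_ifs <;> first
      | rfl
      | omega
      | exact getElem_congr'' (by omega)
  · intro m n hm hn; rw [hN] at hm hn; unfold swapIdx; split_ifs <;> omega
  · intro m n hm hn hlt
    have hm' := hm; have hn' := hn; rw [hN] at hm' hn'
    by_cases hb : a.length + x'.length ≤ n ∧ n < a.length + x'.length + x.length ∧
        a.length ≤ m ∧ m < a.length + x'.length
    · right
      intro i hi o ho hpos
      have hmx' : (a ++ x' ++ x ++ b)[m]'hm ∈ x' := quad_mem2 (by omega) (by omega)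
      have hnx : (a ++ x' ++ x ++ b)[n]'hn ∈ x := quad_mem3 (by omega) (by omega)
      exact hdisj o.1 (output_pos_mem hnx ho) (hpos ▸ input_pos_mem hmx' hi)
    · left
      unfold swapIdx at hlt
      split_ifs at hlt <;> omega
/-- **Statement 9 (Church-Rosser for UTxO).** If `y ++ x ++ x'` is a chunk and
`utxi (y ++ x') = utxi (y ++ x ++ x')`, then `x` and `x'` commute and
`y ++ x' ++ x` is a chunk. -/
theorem church_rosser (val : V → β → Tx α β V → (ℕ × α) → Prop)
    (y x x' : List (Tx α β V))
    (hy : IsChunk val y) (hx : IsChunk val x) (hx' : IsChunk val x')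
    (h : IsChunk val (y ++ x ++ x'))
    (hutxi : utxi (y ++ x') = utxi (y ++ x ++ x')) :
    Commuting val x x' ∧ IsChunk val (y ++ x' ++ x) := by
  have hq : IsChunk val (y ++ x ++ x' ++ []) := by simpa [List.append_assoc] using h
  obtain ⟨c1, c2, c3⟩ := hq
  simp only [List.get_eq_getElem] at c1 c2 c3
  have hLq : (y ++ x ++ x' ++ ([] : List (Tx α β V))).length
      = y.length + x.length + x'.length := by simp [List.length_append]; omega
  have key : ∀ p, p ∈ posList x → p ∈ posList x' → False := by
    rintro p ⟨tx, htx, hp⟩ ⟨tx', htx', hp'⟩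
    obtain ⟨j, hj, rfl⟩ := List.mem_iff_getElem.mp htx
    obtain ⟨j', hj', rfl⟩ := List.mem_iff_getElem.mp htx'
    have hmj : y.length + j < (y ++ x ++ x' ++ ([] : List (Tx α β V))).length := by
      rw [hLq]; omega
    have hmj' : y.length + x.length + j' < (y ++ x ++ x' ++ ([] : List (Tx α β V))).length := by
      rw [hLq]; omega
    have g2 : (y ++ x ++ x' ++ [])[y.length + j]'hmj = x[j] := quad2 hj
    have g3 : (y ++ x ++ x' ++ [])[y.length + x.length + j']'hmj' = x'[j'] := quad3 hj'
    simp only [posTx, Set.mem_union, inputPos, outputPos, Set.mem_setOf_eq] at hp hp'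
    rcases hp with ⟨i, hi, hip⟩ | ⟨o, ho, hop⟩
    · rcases hp' with ⟨i', hi', hip'⟩ | ⟨o', ho', hop'⟩
      · have := (c2 (y.length+j) (y.length+x.length+j') hmj hmj' i (by rw [g2]; exact hi)
          i' (by rw [g3]; exact hi') (by rw [hip, hip'])).1
        omega
      · have := (c3 (y.length+j) (y.length+x.length+j') hmj hmj' i (by rw [g2]; exact hi)
          o' (by rw [g3]; exact ho') (by rw [hip, hop'])).1
        omega
    · rcases hp' with ⟨i', hi', hip'⟩ | ⟨o', ho', hop'⟩
      · -- output of x, input of x' : use the utxi hypothesis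
        have hmem : p ∈ utxi (y ++ x') := by
          simp only [utxi, Set.mem_setOf_eq, List.get_eq_getElem]
          have hky' : y.length + j' < (y ++ x').length := by simp [List.length_append]; omega
          refine ⟨y.length + j', hky', i', ?_, hip', ?_⟩
          · rw [List.getElem_append_right (by omega),
              getElem_congr'' (show y.length + j' - y.length = j' by omega)]
            exact hi'
          · intro k hk hklt o2 ho2 hpe
            by_cases hky : k < y.length
            · have gk : (y ++ x')[k]'hk = (y ++ x ++ x' ++ [])[k]'(by rw [hLq]; omega) := by
                rw [List.getElem_append_left hky, quad1 hky]
              have := (c1 k (y.length + j) (by rw [hLq]; omega) hmj o2 (by rw [← gk]; exact ho2)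
                o (by rw [g2]; exact ho) (by rw [hpe, hop])).1
              omega
            · have hkx' : k - y.length < x'.length := by
                simp [List.length_append] at hk; omega
              have gk : (y ++ x')[k]'hk
                  = (y ++ x ++ x' ++ [])[y.length + x.length + (k - y.length)]'(by
                      rw [hLq]; omega) := by
                rw [List.getElem_append_right (by omega), quad3 hkx']
              have := (c1 (y.length + x.length + (k - y.length)) (y.length + j)
                (by rw [hLq]; omega) hmj o2 (by rw [← gk]; exact ho2)
                o (by rw [g2]; exact ho) (by rw [hpe, hop])).1
              omega
        rw [hutxi] at hmem
        have hmem2 : p ∈ utxi (y ++ x ++ x' ++ []) := by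
          simpa [List.append_assoc] using hmem
        simp only [utxi, Set.mem_setOf_eq, List.get_eq_getElem] at hmem2
        obtain ⟨m3, hm3, i3, hi3, hp3, hfar⟩ := hmem2
        have hmeq : m3 = y.length + x.length + j' :=
          (c2 m3 (y.length + x.length + j') hm3 hmj' i3 hi3 i'
            (by rw [g3]; exact hi') (by rw [hp3, hip'])).1
        exact (hfar (y.length + j) hmj (by omega) o (by rw [g2]; exact ho)) hop
      · have := (c1 (y.length+j) (y.length+x.length+j') hmj hmj' o (by rw [g2]; exact ho)
          o' (by rw [g3]; exact ho') (by rw [hop, hop'])).1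
        omega
  have key' : ∀ p, p ∈ posList x' → p ∈ posList x → False := fun p h1 h2 => key p h2 h1
  constructor
  · intro z
    constructor
    · constructor
      · intro hc
        have := swap_block val x x' [] z key (by simpa [List.append_assoc] using hc)
        simpa [List.append_assoc] using this
      · intro hc
        have := swap_block val x' x [] z key' (by simpa [List.append_assoc] using hc)
        simpa [List.append_assoc] using this
    · constructor
      · intro hc
        have := swap_block val x x' z [] key (by simpa [List.append_assoc] using hc)
        simpa [List.append_assoc] using this
      · intro hc
        have := swap_block val x' x z [] key' (by simpa [List.append_assoc] using hc)
        simpa [List.append_assoc] using this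
  · have := swap_block val x x' y [] key (by simpa [List.append_assoc] using h)
    simpa [List.append_assoc] using this
end

section
/- For any chunk x in an IEUTxO model T, the concrete positions pos(x) (atoms labelling inputs and outputs in x) coincide with the abstract positions posi(x) computed in the monoid of chunks F(T) obtained by adjoining a failure element ⊤ to the chunks of T. -/
variable {α β V : Type}

/-- Action of an atoms-permutation on a transaction: rename all positions. -/
def permTx (π : Equiv.Perm ℕ) (tx : Tx α β V) : Tx α β V where
  inputs := (fun i : ℕ × α => (π i.1, i.2)) '' tx.inputs
  outputs := (fun o : ℕ × β × V => (π o.1, o.2)) '' tx.outputs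
  fin_inputs := tx.fin_inputs.image _
  fin_outputs := tx.fin_outputs.image _
  nontrivial := tx.nontrivial.imp (fun h => h.image _) (fun h => h.image _)

/-- Action of an atoms-permutation on a list of transactions. -/
def permList (π : Equiv.Perm ℕ) (txs : List (Tx α β V)) : List (Tx α β V) :=
  txs.map (permTx π)

/-- The abstract positions of a chunk `x`, computed in the monoid of chunks
`F(T)` (chunks plus a failure element, composition being validated concatenation,
defaulting to failure): those atoms `a` such that for every permutation `π`
fixing `a`, neither `(π·x) ++ x` nor `x ++ (π·x)` is a chunk. -/
def posiF (val : V → β → Tx α β V → (ℕ × α) → Prop)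
    (x : List (Tx α β V)) : Set ℕ :=
  {a | ∀ π : Equiv.Perm ℕ, π a = a →
        ¬ IsChunk val (permList π x ++ x) ∧ ¬ IsChunk val (x ++ permList π x)}

/-! Positions of `x` that `π` fixes are reused by `π·x` in the same role, which breaks the
uniqueness of input or output positions in `x ++ π·x` and `π·x ++ x`. Conversely, an atom
`a ∉ pos x` is fixed by a permutation moving all of `pos x` to fresh atoms; by equivariance of
validation `π·x` is again a chunk, and chunks with disjoint positions always compose. -/

theorem posTx_subset_posList {t : Tx α β V} {x : List (Tx α β V)} (ht : t ∈ x) :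
    posTx t ⊆ posList x :=
  fun _ ha => ⟨t, ht, ha⟩

theorem posList_eq_biUnion (x : List (Tx α β V)) : posList x = ⋃ t ∈ x, posTx t := by
  ext a
  simp [posList]

theorem inputPos_eq_image (t : Tx α β V) : inputPos t = Prod.fst '' t.inputs := rfl

theorem outputPos_eq_image (t : Tx α β V) : outputPos t = Prod.fst '' t.outputs := rfl

theorem posTx_finite (t : Tx α β V) : (posTx t).Finite :=
  (t.fin_inputs.image Prod.fst).union (t.fin_outputs.image Prod.fst)

theorem posList_finite (x : List (Tx α β V)) : (posList x).Finite := by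
  rw [posList_eq_biUnion]
  exact x.finite_toSet.biUnion fun t _ => posTx_finite t

theorem inputPos_permTx (π : Equiv.Perm ℕ) (t : Tx α β V) :
    inputPos (permTx π t) = π '' inputPos t := by
  simp only [inputPos_eq_image, permTx, Set.image_image]

theorem outputPos_permTx (π : Equiv.Perm ℕ) (t : Tx α β V) :
    outputPos (permTx π t) = π '' outputPos t := by
  simp only [outputPos_eq_image, permTx, Set.image_image]

theorem posList_permList (π : Equiv.Perm ℕ) (x : List (Tx α β V)) :
    posList (permList π x) = π '' posList x := by
  simp [posList_eq_biUnion, permList, posTx, inputPos_permTx, outputPos_permTx,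
    Set.image_union, Set.image_iUnion₂]

section Chunk

variable {val : V → β → Tx α β V → (ℕ × α) → Prop}

def ChunkRel (val : V → β → Tx α β V → (ℕ × α) → Prop) (m n : ℕ) (t t' : Tx α β V) : Prop :=
  (∀ o ∈ t.outputs, ∀ o' ∈ t'.outputs, o.1 = o'.1 → m = n ∧ o = o') ∧
  (∀ i ∈ t.inputs, ∀ i' ∈ t'.inputs, i.1 = i'.1 → m = n ∧ i = i') ∧
  (∀ i ∈ t.inputs, ∀ o ∈ t'.outputs, i.1 = o.1 → n < m ∧ val o.2.2 o.2.1 t i)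

theorem isChunk_iff_chunkRel {txs : List (Tx α β V)} :
    IsChunk val txs ↔ ∀ m n (hm : m < txs.length) (hn : n < txs.length),
      ChunkRel val m n txs[m] txs[n] := by
  simp only [IsChunk, ChunkRel, List.get_eq_getElem, forall_and]

theorem chunkRel_add_add_iff {k m n : ℕ} {t t' : Tx α β V} :
    ChunkRel val (k + m) (k + n) t t' ↔ ChunkRel val m n t t' := by
  simp only [ChunkRel, Nat.add_left_cancel_iff, Nat.add_lt_add_iff_left]

theorem chunkRel_of_disjoint {m n : ℕ} {t t' : Tx α β V}
    (h : Disjoint (posTx t) (posTx t')) : ChunkRel val m n t t' := by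
  have hne : ∀ {a b}, a ∈ posTx t → b ∈ posTx t' → a ≠ b :=
    fun ha hb he => Set.disjoint_left.mp h ha (he ▸ hb)
  exact ⟨fun o ho o' ho' he => (hne (Or.inr ⟨o, ho, rfl⟩) (Or.inr ⟨o', ho', rfl⟩) he).elim,
    fun i hi i' hi' he => (hne (Or.inl ⟨i, hi, rfl⟩) (Or.inl ⟨i', hi', rfl⟩) he).elim,
    fun i hi o ho he => (hne (Or.inl ⟨i, hi, rfl⟩) (Or.inr ⟨o, ho, rfl⟩) he).elim⟩

theorem ChunkRel.disjoint_inputPos {m n : ℕ} {t t' : Tx α β V} (h : ChunkRel val m n t t')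
    (hmn : m ≠ n) : Disjoint (inputPos t) (inputPos t') := by
  rw [Set.disjoint_left]
  rintro _ ⟨i, hi, rfl⟩ ⟨i', hi', he⟩
  exact hmn (h.2.1 i hi i' hi' he.symm).1

theorem ChunkRel.disjoint_outputPos {m n : ℕ} {t t' : Tx α β V} (h : ChunkRel val m n t t')
    (hmn : m ≠ n) : Disjoint (outputPos t) (outputPos t') := by
  rw [Set.disjoint_left]
  rintro _ ⟨o, ho, rfl⟩ ⟨o', ho', he⟩
  exact hmn (h.1 o ho o' ho' he.symm).1

theorem ChunkRel.permTx
    (hval : ∀ (π : Equiv.Perm ℕ) (v : V) (d : β) (tx : Tx α β V) (i : ℕ × α),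
        val v d (permTx π tx) (π i.1, i.2) ↔ val v d tx i)
    (π : Equiv.Perm ℕ) {m n : ℕ} {t t' : Tx α β V} (h : ChunkRel val m n t t') :
    ChunkRel val m n (permTx π t) (permTx π t') := by
  obtain ⟨hout, hin, hval'⟩ := h
  refine ⟨?_, ?_, ?_⟩
  · rintro _ ⟨o, ho, rfl⟩ _ ⟨o', ho', rfl⟩ he
    obtain ⟨hmn, rfl⟩ := hout o ho o' ho' (π.injective he)
    exact ⟨hmn, rfl⟩
  · rintro _ ⟨i, hi, rfl⟩ _ ⟨i', hi', rfl⟩ he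
    obtain ⟨hmn, rfl⟩ := hin i hi i' hi' (π.injective he)
    exact ⟨hmn, rfl⟩
  · rintro _ ⟨i, hi, rfl⟩ _ ⟨o, ho, rfl⟩ he
    obtain ⟨hnm, hv⟩ := hval' i hi o ho (π.injective he)
    exact ⟨hnm, (hval π _ _ _ i).mpr hv⟩

theorem isChunk_permList
    (hval : ∀ (π : Equiv.Perm ℕ) (v : V) (d : β) (tx : Tx α β V) (i : ℕ × α),
        val v d (permTx π tx) (π i.1, i.2) ↔ val v d tx i)
    (π : Equiv.Perm ℕ) {x : List (Tx α β V)} (hx : IsChunk val x) :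
    IsChunk val (permList π x) := by
  rw [isChunk_iff_chunkRel] at hx ⊢
  intro m n hm hn
  simp only [permList, List.length_map, List.getElem_map] at hm hn ⊢
  exact (hx m n hm hn).permTx hval π

theorem isChunk_append_of_disjoint {y z : List (Tx α β V)} (hy : IsChunk val y)
    (hz : IsChunk val z) (h : Disjoint (posList y) (posList z)) : IsChunk val (y ++ z) := by
  have hpos : ∀ t ∈ y, ∀ t' ∈ z, Disjoint (posTx t) (posTx t') := fun t ht t' ht' =>
    h.mono (posTx_subset_posList ht) (posTx_subset_posList ht')
  rw [isChunk_iff_chunkRel] at hy hz ⊢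
  intro m n hm hn
  rcases lt_or_ge m y.length with hmy | hmy <;> rcases lt_or_ge n y.length with hny | hny
  · rw [List.getElem_append_left hmy, List.getElem_append_left hny]
    exact hy m n hmy hny
  · rw [List.getElem_append_left hmy, List.getElem_append_right hny]
    exact chunkRel_of_disjoint (hpos _ (List.getElem_mem _) _ (List.getElem_mem _))
  · rw [List.getElem_append_right hmy, List.getElem_append_left hny]
    exact chunkRel_of_disjoint (hpos _ (List.getElem_mem _) _ (List.getElem_mem _)).symm
  · obtain ⟨m, rfl⟩ := Nat.exists_eq_add_of_le hmy
    obtain ⟨n, rfl⟩ := Nat.exists_eq_add_of_le hny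
    simp only [List.length_append, Nat.add_lt_add_iff_left] at hm hn
    rw [List.getElem_append_right hmy, List.getElem_append_right hny]
    simpa only [Nat.add_sub_cancel_left, chunkRel_add_add_iff] using hz m n hm hn

theorem IsChunk.exists_chunkRel_of_mem_append {y z : List (Tx α β V)}
    (h : IsChunk val (y ++ z)) {t t' : Tx α β V} (ht : t ∈ y) (ht' : t' ∈ z) :
    ∃ m n, m ≠ n ∧ ChunkRel val m n t t' := by
  obtain ⟨m, hm, rfl⟩ := List.mem_iff_getElem.mp ht
  obtain ⟨n, hn, rfl⟩ := List.mem_iff_getElem.mp ht'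
  have hrel := isChunk_iff_chunkRel.mp h m (n + y.length) (by simp; omega) (by simp; omega)
  rw [List.getElem_append_left hm, ← List.getElem_append_right' y hn] at hrel
  exact ⟨m, n + y.length, by omega, hrel⟩

theorem IsChunk.disjoint_inputPos_of_mem_append {y z : List (Tx α β V)}
    (h : IsChunk val (y ++ z)) {t t' : Tx α β V} (ht : t ∈ y) (ht' : t' ∈ z) :
    Disjoint (inputPos t) (inputPos t') :=
  let ⟨_, _, hmn, hrel⟩ := h.exists_chunkRel_of_mem_append ht ht'
  hrel.disjoint_inputPos hmn

theorem IsChunk.disjoint_outputPos_of_mem_append {y z : List (Tx α β V)}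
    (h : IsChunk val (y ++ z)) {t t' : Tx α β V} (ht : t ∈ y) (ht' : t' ∈ z) :
    Disjoint (outputPos t) (outputPos t') :=
  let ⟨_, _, hmn, hrel⟩ := h.exists_chunkRel_of_mem_append ht ht'
  hrel.disjoint_outputPos hmn

end Chunk

theorem not_isChunk_append_permList {val : V → β → Tx α β V → (ℕ × α) → Prop}
    {x : List (Tx α β V)} {a : ℕ} (ha : a ∈ posList x) {π : Equiv.Perm ℕ} (hπ : π a = a) :
    ¬ IsChunk val (permList π x ++ x) ∧ ¬ IsChunk val (x ++ permList π x) := by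
  obtain ⟨t, ht, hat⟩ := ha
  have hπt : permTx π t ∈ permList π x := List.mem_map_of_mem ht
  rcases hat with hin | hout
  · have hin' : a ∈ inputPos (permTx π t) := by
      rw [inputPos_permTx]
      exact ⟨a, hin, hπ⟩
    exact ⟨fun h => Set.disjoint_left.mp (h.disjoint_inputPos_of_mem_append hπt ht) hin' hin,
      fun h => Set.disjoint_left.mp (h.disjoint_inputPos_of_mem_append ht hπt) hin hin'⟩
  · have hout' : a ∈ outputPos (permTx π t) := by
      rw [outputPos_permTx]
      exact ⟨a, hout, hπ⟩
    exact ⟨fun h => Set.disjoint_left.mp (h.disjoint_outputPos_of_mem_append hπt ht) hout' hout,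
      fun h => Set.disjoint_left.mp (h.disjoint_outputPos_of_mem_append ht hπt) hout hout'⟩

theorem exists_perm_fixing_disjoint_image {S : Set ℕ} (hS : S.Finite) {a : ℕ} (ha : a ∉ S) :
    ∃ π : Equiv.Perm ℕ, π a = a ∧ Disjoint (π '' S) S := by
  obtain ⟨N, hN⟩ := (hS.insert a).bddAbove
  let g : ℕ → ℕ := fun s => if s = a then a else s + N + 1
  have hg : Set.InjOn g (insert a S) := by
    intro s hs s' hs' h
    have hsN := hN hs
    have hs'N := hN hs'
    simp only [g] at h
    split_ifs at h <;> omega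
  obtain ⟨π, hπ⟩ := Cardinal.extend_function_of_lt ⟨_, hg.injective⟩
    (by simpa only [Cardinal.mk_nat] using (hS.insert a).lt_aleph0) ⟨Equiv.refl ℕ⟩
  have hπg : ∀ s ∈ insert a S, π s = g s := fun s hs => hπ ⟨s, hs⟩
  refine ⟨π, by simpa [g] using hπg a (Set.mem_insert a S), ?_⟩
  rw [Set.disjoint_left]
  rintro _ ⟨s, hs, rfl⟩ hπs
  have hshift : π s = s + N + 1 := by
    simpa [g, ne_of_mem_of_not_mem hs ha] using hπg s (Set.mem_insert_of_mem a hs)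
  have hπsN := hN (Set.mem_insert_of_mem a hπs)
  omega

theorem exists_perm_isChunk_permList_append {val : V → β → Tx α β V → (ℕ × α) → Prop}
    (hval : ∀ (π : Equiv.Perm ℕ) (v : V) (d : β) (tx : Tx α β V) (i : ℕ × α),
        val v d (permTx π tx) (π i.1, i.2) ↔ val v d tx i)
    {x : List (Tx α β V)} (hx : IsChunk val x) {a : ℕ} (ha : a ∉ posList x) :
    ∃ π : Equiv.Perm ℕ, π a = a ∧ IsChunk val (permList π x ++ x) := by
  obtain ⟨π, hπa, hπx⟩ := exists_perm_fixing_disjoint_image (posList_finite x) ha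
  refine ⟨π, hπa, isChunk_append_of_disjoint (isChunk_permList hval π hx) hx ?_⟩
  rwa [posList_permList]

/-- **Statement 19.** For any chunk `x` of an (equivariant) IEUTxO model, the
concrete positions `pos x` coincide with the abstract positions `posi x`
computed in the monoid of chunks `F(T)`. -/
theorem pos_eq_posi (val : V → β → Tx α β V → (ℕ × α) → Prop)
    (hval : ∀ (π : Equiv.Perm ℕ) (v : V) (d : β) (tx : Tx α β V) (i : ℕ × α),
        val v d (permTx π tx) (π i.1, i.2) ↔ val v d tx i)
    (x : List (Tx α β V)) (hx : IsChunk val x) :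
    posList x = posiF val x := by
  ext a
  refine ⟨fun ha π hπ => not_isChunk_append_permList ha hπ, fun ha => ?_⟩
  by_contra hna
  obtain ⟨π, hπa, hchunk⟩ := exists_perm_isChunk_permList_append hval hx hna
  exact (ha π hπa).1 hchunk
end
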